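/- arXiv:2407.06521 — 6 statements merged into one kernel-verified Lean document; each statement's English description precedes it below -/
import Mathlib

section
/- For all indices 1 ≤ i, j ≤ K, the inner product d_iᴴ d_j equals the (i,j) entry of F_11, i.e. d_iᴴ d_j = [(A_rᴴ Ȧ_r) ⊙ (β^* Ȧ_tᴴ R^* A_t β) + (A_rᴴ A_r) ⊙ (β^* Ȧ_tᴴ R^* Ȧ_t β) + (Ȧ_rᴴ Ȧ_r) ⊙ (β^* A_tᴴ R^* A_t β) + (Ȧ_rᴴ A_r) ⊙ (β^* A_tᴴ R^* Ȧ_t β)]_{ij}. (This is the θ–θ block identity underlying Lemma 1 of the paper, with R = x xᴴ playing the role of the transmit covariance matrix.) -/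
open Matrix
open scoped Matrix ComplexConjugate

private lemma d_entry_aux {K Nt Nr : ℕ} (M : Matrix (Fin Nr) (Fin K) ℂ)
    (N : Matrix (Fin Nt) (Fin K) ℂ) (b : Fin K → ℂ) (x : Matrix (Fin Nt) (Fin 1) ℂ)
    (i : Fin K) (n : Fin Nr) :
    (M * Matrix.diagonal b * (Matrix.of fun k (_ : Fin 1) => if k = i then (1:ℂ) else 0)
      * (Matrix.of fun k (_ : Fin 1) => if k = i then (1:ℂ) else 0)ᵀ * Nᵀ * x) n 0
    = M n i * b i * ∑ m, N m i * x m 0 := by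
  simp [Matrix.mul_apply, Matrix.diagonal, Matrix.transpose_apply, Finset.mul_sum,
    Finset.sum_mul, ite_mul, mul_ite]
  exact Finset.sum_congr rfl fun m _ => by ring

private lemma mid_aux {K Nt : ℕ} (M N : Matrix (Fin Nt) (Fin K) ℂ) (b : Fin K → ℂ)
    (x : Matrix (Fin Nt) (Fin 1) ℂ) (i j : Fin K) :
    ((Matrix.diagonal b).map (starRingEnd ℂ) * Mᴴ * (x * xᴴ).map (starRingEnd ℂ) * N
      * Matrix.diagonal b) i j
    = conj (b i) * conj (∑ m, M m i * x m 0) * (b j * ∑ m, N m j * x m 0) := by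
  simp [Matrix.mul_apply, Matrix.map_apply, Matrix.conjTranspose_apply, Matrix.diagonal,
    ite_mul, mul_ite, Finset.sum_mul, Finset.mul_sum, map_sum, _root_.map_mul,
    apply_ite (starRingEnd ℂ)]
  refine Finset.sum_congr rfl fun a _ => Finset.sum_congr rfl fun c _ => by ring

theorem stmt0 (K Nt Nr : ℕ) (hK : 0 < K) (hNt : 0 < Nt) (hNr : 0 < Nr)
    (Ar dAr : Matrix (Fin Nr) (Fin K) ℂ)
    (At dAt : Matrix (Fin Nt) (Fin K) ℂ)
    (b : Fin K → ℂ) (x : Matrix (Fin Nt) (Fin 1) ℂ)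
    (β : Matrix (Fin K) (Fin K) ℂ) (hβ : β = Matrix.diagonal b)
    (R : Matrix (Fin Nt) (Fin Nt) ℂ) (hR : R = x * xᴴ)
    (Rs : Matrix (Fin Nt) (Fin Nt) ℂ) (hRs : Rs = R.map (starRingEnd ℂ))
    (e : Fin K → Matrix (Fin K) (Fin 1) ℂ)
    (he : ∀ i, e i = Matrix.of fun k _ => if k = i then 1 else 0)
    (d p q : Fin K → Matrix (Fin Nr) (Fin 1) ℂ)
    (hd : ∀ i, d i = dAr * β * (e i) * (e i)ᵀ * Atᵀ * x + Ar * β * (e i) * (e i)ᵀ * dAtᵀ * x)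
    (hp : ∀ i, p i = Ar * (e i) * (e i)ᵀ * Atᵀ * x)
    (hq : ∀ i, q i = Complex.I • (Ar * (e i) * (e i)ᵀ * Atᵀ * x))
    (F11 F12 F22 : Matrix (Fin K) (Fin K) ℂ)
    (hF11 : F11 = (Arᴴ * dAr) ⊙ (β.map (starRingEnd ℂ) * dAtᴴ * Rs * At * β)
        + (Arᴴ * Ar) ⊙ (β.map (starRingEnd ℂ) * dAtᴴ * Rs * dAt * β)
        + (dArᴴ * dAr) ⊙ (β.map (starRingEnd ℂ) * Atᴴ * Rs * At * β)
        + (dArᴴ * Ar) ⊙ (β.map (starRingEnd ℂ) * Atᴴ * Rs * dAt * β))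
    (hF12 : F12 = (Arᴴ * Ar) ⊙ (β.map (starRingEnd ℂ) * dAtᴴ * Rs * At)
        + (dArᴴ * Ar) ⊙ (β.map (starRingEnd ℂ) * Atᴴ * Rs * At))
    (hF22 : F22 = (Arᴴ * Ar) ⊙ (Atᴴ * Rs * At)) :
    ∀ i j : Fin K, ((d i)ᴴ * d j) 0 0 = F11 i j := by
  intro i j
  subst hβ hR hRs hF11
  have hd' : ∀ k (n : Fin Nr), d k n 0
      = dAr n k * b k * (∑ m, At m k * x m 0) + Ar n k * b k * (∑ m, dAt m k * x m 0) := by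
    intro k n
    rw [hd k, he k]
    simp only [Matrix.add_apply, d_entry_aux]
  have hL : ((d i)ᴴ * d j) 0 0 = ∑ n, conj (d i n 0) * d j n 0 := by
    simp [Matrix.mul_apply, Matrix.conjTranspose_apply]
  rw [hL]
  simp only [Matrix.add_apply, Matrix.hadamard_apply, mid_aux]
  simp only [hd', Matrix.mul_apply, Matrix.conjTranspose_apply, map_add, _root_.map_mul,
    Finset.sum_mul, ← Finset.sum_add_distrib]
  refine Finset.sum_congr rfl fun n _ => ?_
  simp only [starRingEnd_apply]
  ring
end

section
/- For all indices 1 ≤ i, j ≤ K, the inner product d_iᴴ p_j equals the (i,j) entry of F_12, i.e. d_iᴴ p_j = [(A_rᴴ A_r) ⊙ (β^* Ȧ_tᴴ R^* A_t) + (Ȧ_rᴴ A_r) ⊙ (β^* A_tᴴ R^* A_t)]_{ij}. (This is the θ–β_R cross-block identity underlying Lemma 1 of the paper.) -/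
open Matrix
open scoped Matrix ComplexConjugate

theorem stmt1 (K Nt Nr : ℕ) (hK : 0 < K) (hNt : 0 < Nt) (hNr : 0 < Nr)
    (Ar dAr : Matrix (Fin Nr) (Fin K) ℂ)
    (At dAt : Matrix (Fin Nt) (Fin K) ℂ)
    (b : Fin K → ℂ) (x : Matrix (Fin Nt) (Fin 1) ℂ)
    (β : Matrix (Fin K) (Fin K) ℂ) (hβ : β = Matrix.diagonal b)
    (R : Matrix (Fin Nt) (Fin Nt) ℂ) (hR : R = x * xᴴ)
    (Rs : Matrix (Fin Nt) (Fin Nt) ℂ) (hRs : Rs = R.map (starRingEnd ℂ))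
    (e : Fin K → Matrix (Fin K) (Fin 1) ℂ)
    (he : ∀ i, e i = Matrix.of fun k _ => if k = i then 1 else 0)
    (d p q : Fin K → Matrix (Fin Nr) (Fin 1) ℂ)
    (hd : ∀ i, d i = dAr * β * (e i) * (e i)ᵀ * Atᵀ * x + Ar * β * (e i) * (e i)ᵀ * dAtᵀ * x)
    (hp : ∀ i, p i = Ar * (e i) * (e i)ᵀ * Atᵀ * x)
    (hq : ∀ i, q i = Complex.I • (Ar * (e i) * (e i)ᵀ * Atᵀ * x))
    (F11 F12 F22 : Matrix (Fin K) (Fin K) ℂ)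
    (hF11 : F11 = (Arᴴ * dAr) ⊙ (β.map (starRingEnd ℂ) * dAtᴴ * Rs * At * β)
        + (Arᴴ * Ar) ⊙ (β.map (starRingEnd ℂ) * dAtᴴ * Rs * dAt * β)
        + (dArᴴ * dAr) ⊙ (β.map (starRingEnd ℂ) * Atᴴ * Rs * At * β)
        + (dArᴴ * Ar) ⊙ (β.map (starRingEnd ℂ) * Atᴴ * Rs * dAt * β))
    (hF12 : F12 = (Arᴴ * Ar) ⊙ (β.map (starRingEnd ℂ) * dAtᴴ * Rs * At)
        + (dArᴴ * Ar) ⊙ (β.map (starRingEnd ℂ) * Atᴴ * Rs * At))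
    (hF22 : F22 = (Arᴴ * Ar) ⊙ (Atᴴ * Rs * At)) :
    ∀ i j : Fin K, ((d i)ᴴ * p j) 0 0 = F12 i j := by
  intro i j
  subst hβ hR hRs hF11 hF12 hF22
  simp only [hd, hp, he]
  simp only [Matrix.mul_apply, Matrix.add_apply, Matrix.conjTranspose_apply,
    Matrix.transpose_apply, Matrix.hadamard_apply, Matrix.map_apply, Matrix.of_apply,
    Matrix.diagonal_apply, Fin.sum_univ_one, mul_ite, ite_mul, mul_zero, zero_mul,
    mul_one, one_mul, Finset.sum_ite_eq, Finset.sum_ite_eq', Finset.mem_univ, if_true,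
    map_sum, _root_.map_mul, _root_.map_add, star_sum, star_add, star_mul', star_star, apply_ite (starRingEnd ℂ), map_zero, Finset.mul_sum, Finset.sum_mul, add_mul, Finset.sum_add_distrib, starRingEnd_apply, star_star]
  rw [add_comm]
  congr 1 <;>
  · rw [Finset.sum_comm]
    refine Finset.sum_congr rfl fun s _ => ?_
    rw [Finset.sum_comm]
    refine Finset.sum_congr rfl fun t _ => Finset.sum_congr rfl fun r _ => ?_
    ring
end

section
/- For all indices 1 ≤ i, j ≤ K, the real part of the inner product d_iᴴ q_j equals minus the imaginary part of the (i,j) entry of F_12, i.e. Re(d_iᴴ q_j) = −Im([F_12]_{ij}). (This is the θ–β_I cross-block identity underlying Lemma 1 of the paper.) -/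
open Matrix
open scoped Matrix ComplexConjugate

theorem stmt2 (K Nt Nr : ℕ) (hK : 0 < K) (hNt : 0 < Nt) (hNr : 0 < Nr)
    (Ar dAr : Matrix (Fin Nr) (Fin K) ℂ)
    (At dAt : Matrix (Fin Nt) (Fin K) ℂ)
    (b : Fin K → ℂ) (x : Matrix (Fin Nt) (Fin 1) ℂ)
    (β : Matrix (Fin K) (Fin K) ℂ) (hβ : β = Matrix.diagonal b)
    (R : Matrix (Fin Nt) (Fin Nt) ℂ) (hR : R = x * xᴴ)
    (Rs : Matrix (Fin Nt) (Fin Nt) ℂ) (hRs : Rs = R.map (starRingEnd ℂ))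
    (e : Fin K → Matrix (Fin K) (Fin 1) ℂ)
    (he : ∀ i, e i = Matrix.of fun k _ => if k = i then 1 else 0)
    (d p q : Fin K → Matrix (Fin Nr) (Fin 1) ℂ)
    (hd : ∀ i, d i = dAr * β * (e i) * (e i)ᵀ * Atᵀ * x + Ar * β * (e i) * (e i)ᵀ * dAtᵀ * x)
    (hp : ∀ i, p i = Ar * (e i) * (e i)ᵀ * Atᵀ * x)
    (hq : ∀ i, q i = Complex.I • (Ar * (e i) * (e i)ᵀ * Atᵀ * x))
    (F11 F12 F22 : Matrix (Fin K) (Fin K) ℂ)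
    (hF11 : F11 = (Arᴴ * dAr) ⊙ (β.map (starRingEnd ℂ) * dAtᴴ * Rs * At * β)
        + (Arᴴ * Ar) ⊙ (β.map (starRingEnd ℂ) * dAtᴴ * Rs * dAt * β)
        + (dArᴴ * dAr) ⊙ (β.map (starRingEnd ℂ) * Atᴴ * Rs * At * β)
        + (dArᴴ * Ar) ⊙ (β.map (starRingEnd ℂ) * Atᴴ * Rs * dAt * β))
    (hF12 : F12 = (Arᴴ * Ar) ⊙ (β.map (starRingEnd ℂ) * dAtᴴ * Rs * At)
        + (dArᴴ * Ar) ⊙ (β.map (starRingEnd ℂ) * Atᴴ * Rs * At))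
    (hF22 : F22 = (Arᴴ * Ar) ⊙ (Atᴴ * Rs * At)) :
    ∀ i j : Fin K, (((d i)ᴴ * q j) 0 0).re = -(F12 i j).im := by
  intro i j
  subst hβ hR hRs
  set si : ℂ := ∑ t, At t i * x t 0 with hsi
  set dsi : ℂ := ∑ t, dAt t i * x t 0 with hdsi
  set sj : ℂ := ∑ t, At t j * x t 0 with hsj
  have hdval : ∀ r : Fin Nr, (d i) r 0
      = b i * (dAr r i * si + Ar r i * dsi) := by
    intro r
    rw [hd i]
    simp [he, Matrix.mul_apply, Matrix.diagonal, Finset.sum_mul, Finset.mul_sum, hsi, hdsi,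
      mul_add, Finset.sum_add_distrib]
    exact congrArg₂ (· + ·) (Finset.sum_congr rfl fun t _ => by ring)
      (Finset.sum_congr rfl fun t _ => by ring)
  have hqval : ∀ r : Fin Nr, (q j) r 0 = Complex.I * (Ar r j * sj) := by
    intro r
    rw [hq j]
    simp [he, Matrix.mul_apply, hsj, Finset.mul_sum]
    exact Finset.sum_congr rfl fun t _ => by ring
  have hF : F12 i j = (starRingEnd ℂ) (b i) *
      ((∑ r, (starRingEnd ℂ) (Ar r i) * Ar r j) * ((starRingEnd ℂ) dsi * sj)
        + (∑ r, (starRingEnd ℂ) (dAr r i) * Ar r j) * ((starRingEnd ℂ) si * sj)) := by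
    rw [hF12]
    simp [Matrix.hadamard, Matrix.mul_apply, Matrix.conjTranspose_apply, Matrix.diagonal,
      hsi, hdsi, hsj, map_sum, Finset.mul_sum, Finset.sum_mul, _root_.map_mul, apply_ite
        (starRingEnd ℂ), mul_add]
    refine congrArg₂ (· + ·) ?_ ?_ <;>
      exact Finset.sum_congr rfl fun t1 _ => Finset.sum_congr rfl fun t2 _ =>
        Finset.sum_congr rfl fun r _ => by ring
  have hL : (((d i)ᴴ * q j) 0 0) = Complex.I * F12 i j := by
    rw [Matrix.mul_apply]
    simp only [Matrix.conjTranspose_apply]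
    rw [hF]
    calc ∑ r, (starRingEnd ℂ) ((d i) r 0) * (q j) r 0
        = ∑ r, Complex.I * ((starRingEnd ℂ) (b i) *
            (((starRingEnd ℂ) (Ar r i) * Ar r j) * ((starRingEnd ℂ) dsi * sj)
              + ((starRingEnd ℂ) (dAr r i) * Ar r j) * ((starRingEnd ℂ) si * sj))) := by
          refine Finset.sum_congr rfl fun r _ => ?_
          rw [hdval r, hqval r]
          simp only [_root_.map_mul, _root_.map_add]
          ring
      _ = _ := by
          rw [← Finset.mul_sum, ← Finset.mul_sum]
          congr 1
          rw [Finset.sum_add_distrib, Finset.sum_mul, Finset.sum_mul]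
  rw [hL]
  simp [Complex.mul_re, Complex.I_re, Complex.I_im]
end

section
/- For all indices 1 ≤ i, j ≤ K, the real part of the inner product p_iᴴ d_j equals the real part of the (j,i) entry of F_12, i.e. Re(p_iᴴ d_j) = Re([F_12]_{ji}); equivalently, the β_R–θ block of the Fisher-type Gram matrix equals the transpose of the real part of F_12. (This is the β_R–θ block identity underlying Lemma 1 of the paper.) -/
open Matrix
open scoped Matrix ComplexConjugate

theorem stmt6 (K Nt Nr : ℕ) (hK : 0 < K) (hNt : 0 < Nt) (hNr : 0 < Nr)
    (Ar dAr : Matrix (Fin Nr) (Fin K) ℂ)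
    (At dAt : Matrix (Fin Nt) (Fin K) ℂ)
    (b : Fin K → ℂ) (x : Matrix (Fin Nt) (Fin 1) ℂ)
    (β : Matrix (Fin K) (Fin K) ℂ) (hβ : β = Matrix.diagonal b)
    (R : Matrix (Fin Nt) (Fin Nt) ℂ) (hR : R = x * xᴴ)
    (Rs : Matrix (Fin Nt) (Fin Nt) ℂ) (hRs : Rs = R.map (starRingEnd ℂ))
    (e : Fin K → Matrix (Fin K) (Fin 1) ℂ)
    (he : ∀ i, e i = Matrix.of fun k _ => if k = i then 1 else 0)
    (d p q : Fin K → Matrix (Fin Nr) (Fin 1) ℂ)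
    (hd : ∀ i, d i = dAr * β * (e i) * (e i)ᵀ * Atᵀ * x + Ar * β * (e i) * (e i)ᵀ * dAtᵀ * x)
    (hp : ∀ i, p i = Ar * (e i) * (e i)ᵀ * Atᵀ * x)
    (hq : ∀ i, q i = Complex.I • (Ar * (e i) * (e i)ᵀ * Atᵀ * x))
    (F11 F12 F22 : Matrix (Fin K) (Fin K) ℂ)
    (hF11 : F11 = (Arᴴ * dAr) ⊙ (β.map (starRingEnd ℂ) * dAtᴴ * Rs * At * β)
        + (Arᴴ * Ar) ⊙ (β.map (starRingEnd ℂ) * dAtᴴ * Rs * dAt * β)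
        + (dArᴴ * dAr) ⊙ (β.map (starRingEnd ℂ) * Atᴴ * Rs * At * β)
        + (dArᴴ * Ar) ⊙ (β.map (starRingEnd ℂ) * Atᴴ * Rs * dAt * β))
    (hF12 : F12 = (Arᴴ * Ar) ⊙ (β.map (starRingEnd ℂ) * dAtᴴ * Rs * At)
        + (dArᴴ * Ar) ⊙ (β.map (starRingEnd ℂ) * Atᴴ * Rs * At))
    (hF22 : F22 = (Arᴴ * Ar) ⊙ (Atᴴ * Rs * At)) :
    ∀ i j : Fin K, (((p i)ᴴ * d j) 0 0).re = (F12 j i).re := by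
  intro i j
  have key : ((p i)ᴴ * d j) 0 0 = conj (F12 j i) := by
    subst hβ hR hRs hF12
    simp only [hp, hd, he]
    simp [Matrix.mul_apply, Matrix.conjTranspose_apply, Matrix.hadamard_apply,
      Matrix.diagonal, Matrix.map_apply, Fin.sum_univ_one, Matrix.transpose_apply,
      Finset.mul_sum, Finset.sum_mul, map_sum]
    have comm3 : ∀ (f : Fin Nr → Fin Nt → Fin Nt → ℂ),
        ∑ r, ∑ t, ∑ s, f r t s = ∑ t, ∑ s, ∑ r, f r t s := by
      intro f
      rw [Finset.sum_comm]
      exact Finset.sum_congr rfl fun t _ => Finset.sum_comm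
    simp only [mul_add, Finset.mul_sum, Finset.sum_add_distrib]
    rw [comm3, comm3, add_comm]
    congr 1 <;>
      exact Finset.sum_congr rfl fun a _ => Finset.sum_congr rfl fun c _ =>
        Finset.sum_congr rfl fun r _ => by ring
  rw [key, Complex.conj_re]
end

section
/- For all indices 1 ≤ i, j ≤ K, the real part of the inner product q_iᴴ d_j equals minus the imaginary part of the (j,i) entry of F_12, i.e. Re(q_iᴴ d_j) = −Im([F_12]_{ji}). (This is the β_I–θ block identity underlying Lemma 1 of the paper.) -/
open Matrix
open scoped Matrix ComplexConjugate

lemma stmt7_aux (s u v c1 c2 β : ℂ) :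
    (star Complex.I * star s * (β * v * star c2 + β * u * star c1)).re
      = -((star β * star u * s * c1 + star β * star v * s * c2).im) := by
  simp only [Complex.star_def, Complex.add_re, Complex.add_im, Complex.mul_re, Complex.mul_im,
    Complex.conj_re, Complex.conj_im, Complex.I_re, Complex.I_im]
  ring

theorem stmt7 (K Nt Nr : ℕ) (hK : 0 < K) (hNt : 0 < Nt) (hNr : 0 < Nr)
    (Ar dAr : Matrix (Fin Nr) (Fin K) ℂ)
    (At dAt : Matrix (Fin Nt) (Fin K) ℂ)
    (b : Fin K → ℂ) (x : Matrix (Fin Nt) (Fin 1) ℂ)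
    (β : Matrix (Fin K) (Fin K) ℂ) (hβ : β = Matrix.diagonal b)
    (R : Matrix (Fin Nt) (Fin Nt) ℂ) (hR : R = x * xᴴ)
    (Rs : Matrix (Fin Nt) (Fin Nt) ℂ) (hRs : Rs = R.map (starRingEnd ℂ))
    (e : Fin K → Matrix (Fin K) (Fin 1) ℂ)
    (he : ∀ i, e i = Matrix.of fun k _ => if k = i then 1 else 0)
    (d p q : Fin K → Matrix (Fin Nr) (Fin 1) ℂ)
    (hd : ∀ i, d i = dAr * β * (e i) * (e i)ᵀ * Atᵀ * x + Ar * β * (e i) * (e i)ᵀ * dAtᵀ * x)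
    (hp : ∀ i, p i = Ar * (e i) * (e i)ᵀ * Atᵀ * x)
    (hq : ∀ i, q i = Complex.I • (Ar * (e i) * (e i)ᵀ * Atᵀ * x))
    (F11 F12 F22 : Matrix (Fin K) (Fin K) ℂ)
    (hF11 : F11 = (Arᴴ * dAr) ⊙ (β.map (starRingEnd ℂ) * dAtᴴ * Rs * At * β)
        + (Arᴴ * Ar) ⊙ (β.map (starRingEnd ℂ) * dAtᴴ * Rs * dAt * β)
        + (dArᴴ * dAr) ⊙ (β.map (starRingEnd ℂ) * Atᴴ * Rs * At * β)
        + (dArᴴ * Ar) ⊙ (β.map (starRingEnd ℂ) * Atᴴ * Rs * dAt * β))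
    (hF12 : F12 = (Arᴴ * Ar) ⊙ (β.map (starRingEnd ℂ) * dAtᴴ * Rs * At)
        + (dArᴴ * Ar) ⊙ (β.map (starRingEnd ℂ) * Atᴴ * Rs * At))
    (hF22 : F22 = (Arᴴ * Ar) ⊙ (Atᴴ * Rs * At)) :
    ∀ i j : Fin K, (((q i)ᴴ * d j) 0 0).re = -(F12 j i).im := by
  intro i j
  -- scalar abbreviations
  have hqe : ∀ r, q i r 0 = Complex.I * (Ar r i * ∑ t, At t i * x t 0) := by
    intro r
    simp [hq, he, Matrix.mul_apply, Matrix.transpose_apply, Finset.mul_sum, Finset.sum_mul,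
      mul_assoc]
  have hde : ∀ r, d j r 0
      = dAr r j * b j * (∑ t, At t j * x t 0) + Ar r j * b j * (∑ t, dAt t j * x t 0) := by
    intro r
    simp [hd, he, hβ, Matrix.mul_apply, Matrix.transpose_apply, Matrix.diagonal_apply,
      Finset.mul_sum, Finset.sum_mul, mul_assoc]
  -- middle factor lemma (applied to both dAt and At)
  have hmid : ∀ M : Matrix (Fin Nt) (Fin K) ℂ,
      (β.map (starRingEnd ℂ) * Mᴴ * Rs * At) j i
        = star (b j) * star (∑ t, M t j * x t 0) * (∑ t, At t i * x t 0) := by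
    intro M
    have : star (∑ t, M t j * x t 0) = ∑ t, star (M t j) * star (x t 0) := by
      simp [star_sum, star_mul']
    rw [this]
    subst hβ hR hRs
    simp only [Matrix.mul_apply, Matrix.map_apply, Matrix.conjTranspose_apply,
      Matrix.diagonal_apply, Fin.sum_univ_one, apply_ite star, star_zero, star_mul',
      star_star, ite_mul, zero_mul, Finset.sum_ite_eq, Finset.mem_univ, if_true,
      starRingEnd_apply]
    simp only [Finset.sum_mul, Finset.mul_sum]
    refine Finset.sum_congr rfl fun t _ => Finset.sum_congr rfl fun t' _ => ?_
    ring
  -- factored form of the F12 entry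
  have h2 : F12 j i = star (b j) * star (∑ t, dAt t j * x t 0) * (∑ t, At t i * x t 0)
        * (∑ r, star (Ar r j) * Ar r i)
      + star (b j) * star (∑ t, At t j * x t 0) * (∑ t, At t i * x t 0)
        * (∑ r, star (dAr r j) * Ar r i) := by
    rw [hF12]
    simp only [Matrix.add_apply, Matrix.hadamard_apply, hmid dAt, hmid At, Matrix.mul_apply,
      Matrix.conjTranspose_apply]
    ring
  -- factored form of the LHS entry
  have h1 : ((q i)ᴴ * d j) 0 0
      = star Complex.I * star (∑ t, At t i * x t 0)
        * (b j * (∑ t, At t j * x t 0) * star (∑ r, star (dAr r j) * Ar r i)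
          + b j * (∑ t, dAt t j * x t 0) * star (∑ r, star (Ar r j) * Ar r i)) := by
    have hc2 : star (∑ r, star (dAr r j) * Ar r i) = ∑ r, dAr r j * star (Ar r i) := by
      simp [star_sum, star_mul', star_star, mul_comm]
    have hc1 : star (∑ r, star (Ar r j) * Ar r i) = ∑ r, Ar r j * star (Ar r i) := by
      simp [star_sum, star_mul', star_star, mul_comm]
    rw [hc1, hc2]
    calc ((q i)ᴴ * d j) 0 0 = ∑ r, star (q i r 0) * d j r 0 := by
          simp [Matrix.mul_apply, Matrix.conjTranspose_apply]
      _ = ∑ r, star Complex.I * star (∑ t, At t i * x t 0)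
            * (b j * (∑ t, At t j * x t 0) * (dAr r j * star (Ar r i))
              + b j * (∑ t, dAt t j * x t 0) * (Ar r j * star (Ar r i))) := by
          refine Finset.sum_congr rfl fun r _ => ?_
          rw [hqe r, hde r]
          simp only [star_mul']
          ring
      _ = _ := by
          rw [← Finset.mul_sum]
          congr 1
          rw [Finset.sum_add_distrib, ← Finset.mul_sum, ← Finset.mul_sum]
  rw [h1, h2]
  exact stmt7_aux _ _ _ _ _ _
end

section
/- For all indices 1 ≤ i, j ≤ K, the real part of the inner product q_iᴴ p_j equals minus the imaginary part of the (j,i) entry of F_22, i.e. Re(q_iᴴ p_j) = −Im([F_22]_{ji}). (This is the β_I–β_R block identity underlying Lemma 1 of the paper.) -/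
open Matrix
open scoped Matrix ComplexConjugate

theorem stmt8 (K Nt Nr : ℕ) (hK : 0 < K) (hNt : 0 < Nt) (hNr : 0 < Nr)
    (Ar dAr : Matrix (Fin Nr) (Fin K) ℂ)
    (At dAt : Matrix (Fin Nt) (Fin K) ℂ)
    (b : Fin K → ℂ) (x : Matrix (Fin Nt) (Fin 1) ℂ)
    (β : Matrix (Fin K) (Fin K) ℂ) (hβ : β = Matrix.diagonal b)
    (R : Matrix (Fin Nt) (Fin Nt) ℂ) (hR : R = x * xᴴ)
    (Rs : Matrix (Fin Nt) (Fin Nt) ℂ) (hRs : Rs = R.map (starRingEnd ℂ))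
    (e : Fin K → Matrix (Fin K) (Fin 1) ℂ)
    (he : ∀ i, e i = Matrix.of fun k _ => if k = i then 1 else 0)
    (d p q : Fin K → Matrix (Fin Nr) (Fin 1) ℂ)
    (hd : ∀ i, d i = dAr * β * (e i) * (e i)ᵀ * Atᵀ * x + Ar * β * (e i) * (e i)ᵀ * dAtᵀ * x)
    (hp : ∀ i, p i = Ar * (e i) * (e i)ᵀ * Atᵀ * x)
    (hq : ∀ i, q i = Complex.I • (Ar * (e i) * (e i)ᵀ * Atᵀ * x))
    (F11 F12 F22 : Matrix (Fin K) (Fin K) ℂ)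
    (hF11 : F11 = (Arᴴ * dAr) ⊙ (β.map (starRingEnd ℂ) * dAtᴴ * Rs * At * β)
        + (Arᴴ * Ar) ⊙ (β.map (starRingEnd ℂ) * dAtᴴ * Rs * dAt * β)
        + (dArᴴ * dAr) ⊙ (β.map (starRingEnd ℂ) * Atᴴ * Rs * At * β)
        + (dArᴴ * Ar) ⊙ (β.map (starRingEnd ℂ) * Atᴴ * Rs * dAt * β))
    (hF12 : F12 = (Arᴴ * Ar) ⊙ (β.map (starRingEnd ℂ) * dAtᴴ * Rs * At)
        + (dArᴴ * Ar) ⊙ (β.map (starRingEnd ℂ) * Atᴴ * Rs * At))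
    (hF22 : F22 = (Arᴴ * Ar) ⊙ (Atᴴ * Rs * At)) :
    ∀ i j : Fin K, (((q i)ᴴ * p j) 0 0).re = -(F22 j i).im := by
  intro i j
  set a : Fin K → ℂ := fun k => ∑ t, At t k * x t 0 with ha
  have hpe : ∀ k r (c : Fin 1), p k r c = Ar r k * a k := by
    intro k r c
    rw [hp, he, Subsingleton.elim c 0, ha]
    simp [Matrix.mul_apply, Matrix.transpose_apply, Fin.sum_univ_one,
      Finset.sum_ite_eq', mul_ite, ite_mul, mul_zero, zero_mul, mul_one, one_mul,
      Finset.sum_mul, Finset.mul_sum, mul_comm, mul_assoc, mul_left_comm]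
  clear_value a
  have hAt : (Atᴴ * Rs * At) j i = (starRingEnd ℂ) (a j) * a i := by
    have expand : (starRingEnd ℂ) (a j) * a i
        = ∑ k, ∑ l, (starRingEnd ℂ) (At k j * x k 0) * (At l i * x l 0) := by
      rw [ha]
      simp only [map_sum]
      exact Finset.sum_mul_sum _ _ _ _
    rw [expand]
    subst hRs hR
    simp only [Matrix.mul_apply, Matrix.conjTranspose_apply, Matrix.map_apply,
      _root_.map_mul, Complex.conj_conj, Fin.sum_univ_one, Complex.star_def]
    rw [Finset.sum_comm]
    refine Finset.sum_congr rfl fun l _ => ?_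
    rw [Finset.sum_mul]
    refine Finset.sum_congr rfl fun k _ => ?_
    ring
  have hF : F22 j i = (∑ r, (starRingEnd ℂ) (Ar r j) * Ar r i) * ((starRingEnd ℂ) (a j) * a i) := by
    rw [hF22]
    simp only [Matrix.hadamard_apply, Matrix.mul_apply, Matrix.conjTranspose_apply,
      Complex.star_def]
    rw [← hAt]
    simp [Matrix.mul_apply, Matrix.conjTranspose_apply]
  have hkey : ((q i)ᴴ * p j) 0 0 =
      -Complex.I * ((∑ r, (starRingEnd ℂ) (Ar r i) * Ar r j) * ((starRingEnd ℂ) (a i) * a j)) := by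
    have hq' : q i = Complex.I • p i := by rw [hq, hp]
    rw [hq']
    simp only [Matrix.conjTranspose_smul, Matrix.mul_apply, Matrix.smul_apply,
      Matrix.conjTranspose_apply, hpe, smul_eq_mul, star_mul', Complex.star_def,
      _root_.map_mul, Complex.conj_I]
    rw [show (∑ r, (starRingEnd ℂ) (Ar r i) * Ar r j) * ((starRingEnd ℂ) (a i) * a j)
        = ∑ r, ((starRingEnd ℂ) (Ar r i) * Ar r j) * ((starRingEnd ℂ) (a i) * a j) from
      Finset.sum_mul _ _ _]
    rw [Finset.mul_sum]
    refine Finset.sum_congr rfl fun r _ => ?_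
    ring
  have hconj : (starRingEnd ℂ)
        ((∑ r, (starRingEnd ℂ) (Ar r j) * Ar r i) * ((starRingEnd ℂ) (a j) * a i))
      = (∑ r, (starRingEnd ℂ) (Ar r i) * Ar r j) * ((starRingEnd ℂ) (a i) * a j) := by
    simp only [_root_.map_mul, map_sum, Complex.conj_conj]
    rw [mul_comm (a j)]
    congr 1
    exact Finset.sum_congr rfl fun r _ => mul_comm _ _
  rw [hkey, ← hconj, ← hF]
  simp [Complex.mul_re]
end
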